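/- Let K be a field of characteristic zero, let A be a unital associative K-algebra, let P, e ∈ A be idempotents (P² = P, e² = e), and set R := P - e. For k ≥ 0 let C_k(A) := A^{⊗(k+1)} be the (k+1)-fold tensor power of A over K, let b' : C_k(A) → C_{k-1}(A) be the bar boundary, defined on pure tensors by b'(f₀ ⊗ ⋯ ⊗ f_k) = Σ_{r=0}^{k-1} (-1)^r f₀ ⊗ ⋯ ⊗ (f_r f_{r+1}) ⊗ ⋯ ⊗ f_k, and let N_k ⊆ C_k(A) be the K-subspace spanned by all elements of the two forms: f₀ ⊗ ⋯ ⊗ (f_i e) ⊗ f_{i+1} ⊗ ⋯ ⊗ f_k − f₀ ⊗ ⋯ ⊗ f_i ⊗ (e f_{i+1}) ⊗ ⋯ ⊗ f_k (for 0 ≤ i ≤ k-1 and f_j ∈ A), and f₀ ⊗ ⋯ ⊗ f_{k-1} ⊗ (f_k e) − (e f₀) ⊗ f₁ ⊗ ⋯ ⊗ f_k (for f_j ∈ A). Then for every even natural number q ≥ 2: (a) the signed cyclic permutation T(f₀ ⊗ ⋯ ⊗ f_q) = (-1)^q f₁ ⊗ ⋯ ⊗ f_q ⊗ f₀ fixes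 R^{⊗(q+1)}; and (b) b'(R^{⊗(q+1)}) ∈ N_{q-1}. Consequently the image τ_q(R) of R^{⊗(q+1)} in the quotient C_q(A)/N_q (the circular tensor product of q+1 copies of A over the ring Λ = K + K·e) is a cyclic cycle. -/
import Mathlib


open scoped TensorProduct

/-- Over a field `K` of characteristic zero, let `A` be a unital
`K`-algebra, `P, e ∈ A` idempotents and `R := P - e`. Let `b'` be the bar boundary
`C_q(A) = A^{⊗(q+1)} → C_{q-1}(A) = A^{⊗q}` and `T` the signed cyclic permutation on
`C_q(A)` (characterised on pure tensors), and let `N ⊆ C_{q-1}(A)` be the subspace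
spanned by the relations sliding the idempotent `e` across a tensor sign
(`⋯ ⊗ (f_i e) ⊗ f_{i+1} ⊗ ⋯ − ⋯ ⊗ f_i ⊗ (e f_{i+1}) ⊗ ⋯`, including cyclically
`f₀ ⊗ ⋯ ⊗ (f_k e) − (e f₀) ⊗ ⋯ ⊗ f_k`), i.e. the relations of the circular tensor
product over `Λ = K + K·e`. Then for every even `q ≥ 2`:
(a) `T(R^{⊗(q+1)}) = R^{⊗(q+1)}`; (b) `b'(R^{⊗(q+1)}) ∈ N`; consequently the image
`τ_q(R)` of `R^{⊗(q+1)}` in `C_q(A)/N_q` is a cyclic cycle. -/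
theorem stmt11 (K : Type*) [Field K] [CharZero K] (A : Type*) [Ring A] [Algebra K A]
    (P e : A) (hP : P * P = P) (he : e * e = e)
    (q : ℕ) (hq : 2 ≤ q) (hq2 : Even q)
    (b' : (⨂[K] (_ : Fin (q + 1)), A) →ₗ[K] ⨂[K] (_ : Fin q), A)
    (T : (⨂[K] (_ : Fin (q + 1)), A) →ₗ[K] ⨂[K] (_ : Fin (q + 1)), A)
    (hb' : ∀ f : Fin (q + 1) → A,
      b' (PiTensorProduct.tprod K f) =
        ∑ r : Fin q, ((-1 : K) ^ (r : ℕ)) •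
          PiTensorProduct.tprod K (fun i : Fin q =>
            if (i : ℕ) < (r : ℕ) then f i.castSucc
            else if i = r then f r.castSucc * f r.succ
            else f i.succ))
    (hT : ∀ f : Fin (q + 1) → A,
      T (PiTensorProduct.tprod K f) =
        ((-1 : K) ^ q) • PiTensorProduct.tprod K (fun i => f (i + 1))) :
    let R : A := P - e
    let N : Submodule K (⨂[K] (_ : Fin q), A) := Submodule.span K
      {x : ⨂[K] (_ : Fin q), A |
        (∃ f : Fin q → A, ∃ i j : Fin q, (j : ℕ) = (i : ℕ) + 1 ∧
          x = PiTensorProduct.tprod K (Function.update f i (f i * e)) -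
              PiTensorProduct.tprod K (Function.update f j (e * f j))) ∨
        (∃ f : Fin q → A,
          x = PiTensorProduct.tprod K
                (Function.update f (⟨q - 1, by omega⟩ : Fin q)
                  (f (⟨q - 1, by omega⟩ : Fin q) * e)) -
              PiTensorProduct.tprod K
                (Function.update f (⟨0, by omega⟩ : Fin q)
                  (e * f (⟨0, by omega⟩ : Fin q))))}
    T (PiTensorProduct.tprod K (fun _ : Fin (q + 1) => R)) =
      PiTensorProduct.tprod K (fun _ : Fin (q + 1) => R) ∧
    b' (PiTensorProduct.tprod K (fun _ : Fin (q + 1) => R)) ∈ N := by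
  intro R N
  have hR : R = P - e := rfl
  constructor
  · rw [hT, hq2.neg_one_pow, one_smul]
  · -- part (b)
    set f0 : Fin q → A := fun _ => R with hf0
    have hRR : R * R = R - e * R - R * e := by
      rw [hR]
      simp only [mul_sub, sub_mul, hP, he]
      abel
    let u : Fin q → (⨂[K] (_ : Fin q), A) :=
      fun r => PiTensorProduct.tprod K (Function.update f0 r (R * e))
    let v : Fin q → (⨂[K] (_ : Fin q), A) :=
      fun r => PiTensorProduct.tprod K (Function.update f0 r (e * R))
    let σ : Fin q → Fin q := fun r => ⟨((r : ℕ) + 1) % q, Nat.mod_lt _ (by omega)⟩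
    have hmod : ∀ n : ℕ, (-1 : K) ^ (n % q) = (-1 : K) ^ n := by
      intro n
      conv_rhs => rw [← Nat.div_add_mod n q]
      rw [pow_add, pow_mul, hq2.neg_one_pow, one_pow, one_mul]
    have hσbij : Function.Bijective σ := by
      rw [← Finite.injective_iff_bijective]
      intro a b hab
      have h := congrArg Fin.val hab
      have ha : (a : ℕ) < q := a.isLt
      have hbb : (b : ℕ) < q := b.isLt
      apply Fin.ext
      change ((a : ℕ) + 1) % q = ((b : ℕ) + 1) % q at h
      rcases Nat.lt_or_ge ((a : ℕ) + 1) q with h1 | h1 <;>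
        rcases Nat.lt_or_ge ((b : ℕ) + 1) q with h2 | h2
      · rw [Nat.mod_eq_of_lt h1, Nat.mod_eq_of_lt h2] at h; omega
      · have hb2 : (b : ℕ) + 1 = q := by omega
        rw [Nat.mod_eq_of_lt h1, hb2, Nat.mod_self] at h; omega
      · have ha2 : (a : ℕ) + 1 = q := by omega
        rw [Nat.mod_eq_of_lt h2, ha2, Nat.mod_self] at h; omega
      · omega
    have hmem : ∀ r : Fin q, u r - v (σ r) ∈ N := by
      intro r
      apply Submodule.subset_span
      by_cases h : (r : ℕ) + 1 < q
      · left
        refine ⟨f0, r, σ r, ?_, rfl⟩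
        show ((r : ℕ) + 1) % q = (r : ℕ) + 1
        exact Nat.mod_eq_of_lt h
      · right
        have hr : r = (⟨q - 1, by omega⟩ : Fin q) := by
          apply Fin.ext; have := r.isLt; simp; omega
        have hσr : σ r = (⟨0, by omega⟩ : Fin q) := by
          apply Fin.ext
          show ((r : ℕ) + 1) % q = 0
          have h2 : (r : ℕ) + 1 = q := by have := r.isLt; omega
          rw [h2, Nat.mod_self]
        refine ⟨f0, ?_⟩
        have h3 : u r - v (σ r) = u (⟨q - 1, by omega⟩ : Fin q) - v (⟨0, by omega⟩ : Fin q) :=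
          congrArg₂ (· - ·) (congrArg u hr) (congrArg v hσr)
        rw [h3]
    have hsplit : ∀ r : Fin q,
        PiTensorProduct.tprod K (Function.update f0 r (R * R)) =
          PiTensorProduct.tprod K f0 - v r - u r := by
      intro r
      rw [show R * R = R - e * R - R * e from hRR,
          MultilinearMap.map_update_sub, MultilinearMap.map_update_sub,
          show Function.update f0 r R = f0 from Function.update_eq_self r f0]
    have key : b' (PiTensorProduct.tprod K (fun _ : Fin (q + 1) => R)) =
        ∑ r : Fin q, ((-1 : K) ^ ((r : ℕ) + 1)) • (u r - v (σ r)) := by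
      rw [hb']
      have h1 : ∀ r : Fin q,
          (fun i : Fin q =>
            if (i : ℕ) < (r : ℕ) then (fun _ : Fin (q + 1) => R) i.castSucc
            else if i = r then (fun _ : Fin (q + 1) => R) r.castSucc *
              (fun _ : Fin (q + 1) => R) r.succ
            else (fun _ : Fin (q + 1) => R) i.succ) = Function.update f0 r (R * R) := by
        intro r; funext i
        rcases eq_or_ne i r with h | h
        · subst h; simp [Function.update_apply]
        · simp only [Function.update_apply, if_neg h]
          split_ifs <;> rfl
      simp only [h1, hsplit, smul_sub]
      rw [Finset.sum_sub_distrib, Finset.sum_sub_distrib, Finset.sum_sub_distrib]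
      have e1 : ∑ r : Fin q, ((-1 : K) ^ (r : ℕ)) • PiTensorProduct.tprod K f0 = 0 := by
        rw [← Finset.sum_smul, Fin.sum_univ_eq_sum_range (fun n => (-1 : K) ^ n),
          neg_one_geom_sum, if_pos hq2, zero_smul]
      have e2 : ∑ r : Fin q, ((-1 : K) ^ ((r : ℕ) + 1)) • v (σ r) =
          ∑ r : Fin q, ((-1 : K) ^ (r : ℕ)) • v r := by
        refine Fintype.sum_bijective σ hσbij _ _ ?_
        intro r
        show ((-1 : K) ^ ((r : ℕ) + 1)) • v (σ r) = ((-1 : K) ^ ((σ r : Fin q) : ℕ)) • v (σ r)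
        congr 1
        show _ = (-1 : K) ^ (((r : ℕ) + 1) % q)
        rw [hmod]
      have e3 : ∑ r : Fin q, ((-1 : K) ^ ((r : ℕ) + 1)) • u r =
          -∑ r : Fin q, ((-1 : K) ^ (r : ℕ)) • u r := by
        simp only [pow_succ, mul_neg_one, neg_smul, Finset.sum_neg_distrib]
      rw [e1, e2, e3]
      abel
    rw [key]
    exact Submodule.sum_mem N (fun r _ => Submodule.smul_mem N _ (hmem r))
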